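/- arXiv:1907.05055 — 4 statements merged into one kernel-verified Lean document; each statement's English description precedes it below -/
import Mathlib

section
/- Let L be a semivalid representation of a connected graph G, and let β be a broken cone of P(L), i.e. a cone whose vectors x satisfy that G[supp_+(x)] is disconnected. If α is a cone of P(L) contained in the boundary of β, then: (i) supp_-(α) = supp_-(β); (ii) G[supp_+(α)] equals a single connected component of G[supp_+(β)]; (iii) α is 1-dimensional. -/
/-!
Let `u ∈ L` be nonzero with sign pattern dominated by that of the broken vector `y`. For large `c`,
`c • u - y` has positive support `supp₊ u ∪ (supp₋ y \ supp₋ u)` and negative support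
`supp₋ u ∪ (supp₊ y \ supp₊ u)`. Since (iv) for `y` forbids edges between `supp₊ y` and `supp₋ y`,
the positive supports of `c • u - y` and of its negative are disconnected as soon as the
differences are nonempty, and (iv) applied to them forbids edges between their positive and
negative supports. With the connectivity of `G[supp₋ y]` this forces `supp₋ u = supp₋ y`, and it
leaves no edge from `supp₊ u` to the rest of `supp₊ y`, so that `supp₊ u` is one of the two
components of `G[supp₊ y]` when it is proper. For `u = x` this gives (i) and (ii). For `z` in the
cone of `x` and `s` the least ratio `x v / z v` on `supp x`, the vector `x - s • z` is dominated
by `x` and vanishes somewhere on `supp x`, so by the same dichotomy it is zero: the cone is a ray.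
-/

open Matrix Set

variable {V : Type*} [Fintype V] [DecidableEq V]

/-- Positive support of a vector. -/
def posSupp (x : V → ℝ) : Set V := {v | 0 < x v}

/-- Negative support of a vector. -/
def negSupp (x : V → ℝ) : Set V := {v | x v < 0}

/-- Support of a vector. -/
def supp (x : V → ℝ) : Set V := {v | x v ≠ 0}

/-- External neighborhood of a set of vertices. -/
def nbhd (G : SimpleGraph V) (S : Set V) : Set V := {v | v ∉ S ∧ ∃ u ∈ S, G.Adj u v}

/-- Number of connected components of the subgraph induced by `S`. -/
noncomputable def compCount (G : SimpleGraph V) (S : Set V) : ℕ :=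
  Nat.card (G.induce S).ConnectedComponent

/-- `C` is (the vertex set of) a connected component of the subgraph induced by `S`. -/
def IsComponentOf (G : SimpleGraph V) (S C : Set V) : Prop :=
  ∃ K : (G.induce S).ConnectedComponent, C = Subtype.val '' K.supp

/-- `M ∈ M(G)`: a real symmetric matrix with exactly one negative eigenvalue
(counted with multiplicity), negative entries on edges and zero off-diagonal
entries on non-edges. -/
structure CdVMatrix (G : SimpleGraph V) (M : Matrix V V ℝ) : Prop where
  herm : M.IsHermitian
  edge_neg : ∀ u v, G.Adj u v → M u v < 0
  nonedge_zero : ∀ u v, u ≠ v → ¬ G.Adj u v → M u v = 0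
  one_neg : {i | herm.eigenvalues i < 0}.ncard = 1

/-- Semivalid representation of a graph: conditions (i)-(iv). -/
def Semivalid (G : SimpleGraph V) (L : Submodule ℝ (V → ℝ)) : Prop :=
  ∀ x ∈ L, x ≠ 0 →
    ((posSupp x).Nonempty ∧ (negSupp x).Nonempty) ∧
    ((G.induce (posSupp x)).Connected ∨
      (compCount G (posSupp x) = 2 ∧ (G.induce (negSupp x)).Connected)) ∧
    ((∀ y ∈ L, y ≠ 0 → supp y ⊆ supp x → supp y = supp x) →
      (G.induce (posSupp x)).Connected ∧ (G.induce (negSupp x)).Connected) ∧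
    (¬ (G.induce (posSupp x)).Connected →
      (∀ u ∈ posSupp x, ∀ v ∈ negSupp x, ¬ G.Adj u v) ∧
      (∀ C : Set V, IsComponentOf G (supp x) C → nbhd G C = nbhd G (supp x)))

/-- The sign-pattern cone of `x` in `L` (a relatively open cone of the fan `P(L)`). -/
def signCone (L : Submodule ℝ (V → ℝ)) (x : V → ℝ) : Set (V → ℝ) :=
  {y | y ∈ L ∧ posSupp y = posSupp x ∧ negSupp y = negSupp x}

/-- The dimension of the cone of `x`, i.e. the dimension of its linear span. -/
noncomputable def coneDim (L : Submodule ℝ (V → ℝ)) (x : V → ℝ) : ℕ :=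
  Module.finrank ℝ (Submodule.span ℝ (signCone L x))

/-- The graph parameter η: maximal dimension of a semivalid representation. -/
noncomputable def etaParam (G : SimpleGraph V) : ℕ :=
  sSup {n | ∃ L : Submodule ℝ (V → ℝ), Semivalid G L ∧ Module.finrank ℝ L = n}

/-- Valid representation of a graph. -/
def Valid (G : SimpleGraph V) (X : Submodule ℝ (V → ℝ)) : Prop :=
  ∀ x ∈ X, x ≠ 0 → (G.induce (posSupp x)).Connected

/-- The graph parameter λ: maximal dimension of a valid representation. -/
noncomputable def lambdaParam (G : SimpleGraph V) : ℕ :=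
  sSup {n | ∃ X : Submodule ℝ (V → ℝ), Valid G X ∧ Module.finrank ℝ X = n}

/-- The Strong Arnold hypothesis. -/
def SAH (G : SimpleGraph V) (M : Matrix V V ℝ) : Prop :=
  ∀ X : Matrix V V ℝ, X.IsSymm → (∀ u v, (u = v ∨ G.Adj u v) → X u v = 0) →
    M * X = 0 → X = 0

/-- The Colin de Verdière parameter μ. -/
noncomputable def muParam (G : SimpleGraph V) : ℕ :=
  sSup {n | ∃ M : Matrix V V ℝ, CdVMatrix G M ∧ SAH G M ∧
    Module.finrank ℝ (LinearMap.ker M.mulVecLin) = n}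

section

omit [Fintype V] [DecidableEq V]

namespace SimpleGraph

variable {G : SimpleGraph V} {S T : Set V}

theorem Reachable.mem_of_induce_of_not_adj (hS : ∀ a ∈ S, ∀ b ∈ T \ S, ¬ G.Adj a b)
    {a b : T} (h : (G.induce T).Reachable a b) (ha : a.1 ∈ S) : b.1 ∈ S := by
  by_contra hb
  obtain ⟨p⟩ := h
  obtain ⟨d, -, hd₁, hd₂⟩ := p.exists_boundary_dart {c : T | c.1 ∈ S} ha hb
  exact hS _ hd₁ _ ⟨d.snd.2, hd₂⟩ d.adj

theorem exists_adj_diff_of_connected_induce (hT : (G.induce T).Connected) (hST : S ⊆ T)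
    (hS : S.Nonempty) (hTS : (T \ S).Nonempty) : ∃ a ∈ S, ∃ b ∈ T \ S, G.Adj a b := by
  by_contra! h
  obtain ⟨a, ha⟩ := hS
  obtain ⟨b, hb⟩ := hTS
  exact hb.2 ((hT.preconnected ⟨a, hST ha⟩ ⟨b, hb.1⟩).mem_of_induce_of_not_adj h ha)

theorem not_connected_induce_union {A B : Set V} (hA : A.Nonempty) (hB : B.Nonempty)
    (hAB : Disjoint A B) (hadj : ∀ a ∈ A, ∀ b ∈ B, ¬ G.Adj a b) :
    ¬ (G.induce (A ∪ B)).Connected := by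
  intro h
  obtain ⟨a, ha⟩ := hA
  obtain ⟨b, hb⟩ := hB
  have hbA : b ∈ A := (h.preconnected ⟨a, Or.inl ha⟩ ⟨b, Or.inr hb⟩).mem_of_induce_of_not_adj
    (fun a ha c hc => hadj a ha c (hc.1.resolve_left hc.2)) ha
  exact hAB.notMem_of_mem_left hbA hb

theorem exists_connectedComponent_eq_of_not_adj (hT : compCount G T = 2) (hST : S ⊆ T)
    (hS : S.Nonempty) (hTS : (T \ S).Nonempty) (hadj : ∀ a ∈ S, ∀ b ∈ T \ S, ¬ G.Adj a b) :
    ∃ K : (G.induce T).ConnectedComponent, S = Subtype.val '' K.supp := by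
  obtain ⟨a, ha⟩ := hS
  obtain ⟨p, hpT, hpS⟩ := hTS
  have hclosed (b c : T) (h : (G.induce T).Reachable b c) (hb : b.1 ∈ S) : c.1 ∈ S :=
    h.mem_of_induce_of_not_adj hadj hb
  obtain ⟨K, -, hK⟩ :=
    (Nat.card_eq_two_iff' ((G.induce T).connectedComponentMk ⟨p, hpT⟩)).1 hT
  have hmk (b : T) (hb : b.1 ∈ S) : (G.induce T).connectedComponentMk b = K :=
    hK _ fun h => hpS (hclosed _ _ (ConnectedComponent.exact h) hb)
  refine ⟨K, Set.ext fun b => ⟨fun hb => ⟨⟨b, hST hb⟩, hmk _ hb, rfl⟩, ?_⟩⟩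
  rintro ⟨c, hc, rfl⟩
  exact hclosed _ _ (ConnectedComponent.exact ((hmk ⟨a, hST ha⟩ ha).trans hc.symm)) ha

theorem ConnectedComponent.eq_of_supp_subset {W : Type*} {H : SimpleGraph W}
    {K K' : H.ConnectedComponent} (h : K.supp ⊆ K'.supp) : K = K' :=
  let ⟨_, hv⟩ := K.nonempty_supp
  ConnectedComponent.eq_of_common_vertex hv (h hv)

end SimpleGraph

open SimpleGraph Filter

section SignPatterns

variable {x y z : V → ℝ}

theorem posSupp_neg (x : V → ℝ) : posSupp (-x) = negSupp x := by
  ext v; simp [posSupp, negSupp]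

theorem negSupp_neg (x : V → ℝ) : negSupp (-x) = posSupp x := by
  ext v; simp [posSupp, negSupp]

theorem disjoint_posSupp_negSupp (x : V → ℝ) : Disjoint (posSupp x) (negSupp x) :=
  Set.disjoint_left.2 fun v hp hn => lt_asymm (show (0 : ℝ) < x v from hp) hn

theorem ne_zero_of_posSupp_nonempty (h : (posSupp x).Nonempty) : x ≠ 0 := by
  rintro rfl
  obtain ⟨v, hv⟩ := h
  exact lt_irrefl (0 : ℝ) hv

theorem eventually_signs_smul_sub [Finite V] (x y : V → ℝ) :
    ∀ᶠ c : ℝ in atTop, posSupp (c • x - y) = posSupp x ∪ (negSupp y \ negSupp x) ∧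
      negSupp (c • x - y) = negSupp x ∪ (posSupp y \ posSupp x) := by
  suffices h : ∀ v, ∀ᶠ c : ℝ in atTop,
      (0 < c * x v - y v ↔ 0 < x v ∨ (y v < 0 ∧ ¬ x v < 0)) ∧
        (c * x v - y v < 0 ↔ x v < 0 ∨ (0 < y v ∧ ¬ 0 < x v)) by
    filter_upwards [eventually_all.2 h] with c hc
    exact ⟨Set.ext fun v => (hc v).1, Set.ext fun v => (hc v).2⟩
  intro v
  filter_upwards [eventually_gt_atTop (y v / x v)] with c hc
  rcases lt_trichotomy (x v) 0 with hx | hx | hx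
  · have : c * x v < y v := (div_lt_iff_of_neg hx).1 hc
    constructor <;> constructor <;> intros <;> first | linarith | simp_all [not_lt.2 hx.le]
  · simp [hx]
  · have : y v < c * x v := (div_lt_iff₀ hx).1 hc
    constructor <;> constructor <;> intros <;> first | linarith | simp_all [not_lt.2 hx.le]

theorem posSupp_subset_of_mem_closure {L : Submodule ℝ (V → ℝ)}
    (hx : x ∈ closure (signCone L y)) : posSupp x ⊆ posSupp y := fun v hv => by
  obtain ⟨z, hzv, -, hzy, -⟩ :=
    mem_closure_iff.1 hx {z | 0 < z v} (isOpen_lt continuous_const (continuous_apply v)) hv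
  exact hzy ▸ hzv

theorem negSupp_subset_of_mem_closure {L : Submodule ℝ (V → ℝ)}
    (hx : x ∈ closure (signCone L y)) : negSupp x ⊆ negSupp y := fun v hv => by
  obtain ⟨z, hzv, -, -, hzy⟩ :=
    mem_closure_iff.1 hx {z | z v < 0} (isOpen_lt (continuous_apply v) continuous_const) hv
  exact hzy ▸ hzv

theorem exists_sub_smul_dominated [Finite V] (hx0 : x ≠ 0) (hzp : posSupp z = posSupp x)
    (hzn : negSupp z = negSupp x) :
    ∃ s : ℝ, posSupp (x - s • z) ⊆ posSupp x ∧ negSupp (x - s • z) ⊆ negSupp x ∧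
      ∃ v, x v ≠ 0 ∧ (x - s • z) v = 0 := by
  have hpos (v) : 0 < z v ↔ 0 < x v := Set.ext_iff.1 hzp v
  have hneg (v) : z v < 0 ↔ x v < 0 := Set.ext_iff.1 hzn v
  have hzero (v) : z v = 0 ↔ x v = 0 := by
    rw [← not_iff_not, ← ne_eq, ← ne_eq, ne_iff_lt_or_gt, ne_iff_lt_or_gt, hneg, hpos]
  obtain ⟨v₀, hv₀, hmin⟩ :=
    Set.exists_min_image _ (fun v => x v / z v) (Set.toFinite _) (Function.ne_iff.1 hx0)
  have hfac (v) (hv : x v ≠ 0) : (x - (x v₀ / z v₀) • z) v = z v * (x v / z v - x v₀ / z v₀) := by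
    simp only [Pi.sub_apply, Pi.smul_apply, smul_eq_mul]
    field_simp [mt (hzero v).1 hv]
  have hval (v) (hv : x v = 0) : (x - (x v₀ / z v₀) • z) v = 0 := by simp [hv, (hzero v).2 hv]
  refine ⟨x v₀ / z v₀, fun v hv => ?_, fun v hv => ?_, v₀, hv₀, ?_⟩
  · change 0 < (x - _ • z) v at hv
    by_cases hxv : x v = 0
    · exact absurd (hval v hxv ▸ hv) (lt_irrefl 0)
    · rw [hfac v hxv] at hv
      exact (hpos v).1 (pos_of_mul_pos_left hv (sub_nonneg.2 (hmin v hxv)))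
  · change (x - _ • z) v < 0 at hv
    by_cases hxv : x v = 0
    · exact absurd (hval v hxv ▸ hv) (lt_irrefl 0)
    · rw [hfac v hxv] at hv
      exact (hneg v).1 (neg_of_mul_neg_left hv (sub_nonneg.2 (hmin v hxv)))
  · rw [hfac v₀ hv₀, sub_self, mul_zero]

theorem coneDim_eq_one_of_minimal [Finite V] {L : Submodule ℝ (V → ℝ)} (hx : x ∈ L)
    (hx0 : x ≠ 0) (hmin : ∀ u ∈ L, u ≠ 0 → posSupp u ⊆ posSupp x → negSupp u ⊆ negSupp x →
      posSupp u = posSupp x ∧ negSupp u = negSupp x) :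
    coneDim L x = 1 := by
  suffices h : Submodule.span ℝ (signCone L x) = Submodule.span ℝ {x} by
    rw [coneDim, h, finrank_span_singleton hx0]
  refine le_antisymm (Submodule.span_le.2 ?_)
    (Submodule.span_mono (Set.singleton_subset_iff.2 ⟨hx, rfl, rfl⟩))
  rintro z ⟨hzL, hzp, hzn⟩
  obtain ⟨s, hsp, hsn, v, hv, hsv⟩ := exists_sub_smul_dominated hx0 hzp hzn
  have hxz : x - s • z = 0 := by
    by_contra hu0
    obtain ⟨hup, hun⟩ := hmin _ (L.sub_mem hx (L.smul_mem s hzL)) hu0 hsp hsn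
    rcases hv.lt_or_gt with h | h
    · have h' : v ∈ negSupp (x - s • z) := hun ▸ h
      exact (show (x - s • z) v < 0 from h').ne hsv
    · have h' : v ∈ posSupp (x - s • z) := hup ▸ h
      exact (show 0 < (x - s • z) v from h').ne' hsv
  rw [sub_eq_zero] at hxz
  have hs : s ≠ 0 := by
    rintro rfl
    exact hx0 (by simpa using hxz)
  exact Submodule.mem_span_singleton.2 ⟨s⁻¹, by rw [hxz, smul_smul, inv_mul_cancel₀ hs, one_smul]⟩

end SignPatterns

namespace Semivalid

variable {G : SimpleGraph V} {L : Submodule ℝ (V → ℝ)} {x y u : V → ℝ}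

theorem posSupp_nonempty (hL : Semivalid G L) (hx : x ∈ L) (hx0 : x ≠ 0) :
    (posSupp x).Nonempty :=
  (hL x hx hx0).1.1

theorem negSupp_nonempty (hL : Semivalid G L) (hx : x ∈ L) (hx0 : x ≠ 0) :
    (negSupp x).Nonempty :=
  (hL x hx hx0).1.2

theorem compCount_posSupp_eq_two (hL : Semivalid G L) (hx : x ∈ L) (hx0 : x ≠ 0)
    (hb : ¬ (G.induce (posSupp x)).Connected) : compCount G (posSupp x) = 2 :=
  ((hL x hx hx0).2.1.resolve_left hb).1

theorem connected_negSupp (hL : Semivalid G L) (hx : x ∈ L) (hx0 : x ≠ 0)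
    (hb : ¬ (G.induce (posSupp x)).Connected) : (G.induce (negSupp x)).Connected :=
  ((hL x hx hx0).2.1.resolve_left hb).2

theorem not_adj_posSupp_negSupp (hL : Semivalid G L) (hx : x ∈ L) (hx0 : x ≠ 0)
    (hb : ¬ (G.induce (posSupp x)).Connected) :
    ∀ a ∈ posSupp x, ∀ b ∈ negSupp x, ¬ G.Adj a b :=
  ((hL x hx hx0).2.2.2 hb).1

theorem negSupp_eq_of_dominated [Finite V] (hL : Semivalid G L) (hy : y ∈ L)
    (hbroken : ¬ (G.induce (posSupp y)).Connected) (hu : u ∈ L) (hu0 : u ≠ 0)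
    (hpos : posSupp u ⊆ posSupp y) (hneg : negSupp u ⊆ negSupp y) :
    negSupp u = negSupp y := by
  have huP := hL.posSupp_nonempty hu hu0
  have hy0 : y ≠ 0 := ne_zero_of_posSupp_nonempty (huP.mono hpos)
  by_contra hne
  have hdiff : (negSupp y \ negSupp u).Nonempty :=
    Set.sdiff_nonempty.2 fun h => hne (hneg.antisymm h)
  obtain ⟨c, hwp, hwn⟩ := (eventually_signs_smul_sub u y).exists
  have hw : c • u - y ∈ L := L.sub_mem (L.smul_mem c hu) hy
  have hwb : ¬ (G.induce (posSupp (c • u - y))).Connected := hwp ▸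
    not_connected_induce_union huP hdiff ((disjoint_posSupp_negSupp y).mono hpos sdiff_subset)
      fun a ha b hb => hL.not_adj_posSupp_negSupp hy hy0 hbroken a (hpos ha) b hb.1
  have hw0 : c • u - y ≠ 0 := ne_zero_of_posSupp_nonempty (hwp ▸ huP.mono subset_union_left)
  obtain ⟨a, ha, b, hb, hab⟩ := exists_adj_diff_of_connected_induce
    (hL.connected_negSupp hy hy0 hbroken) hneg (hL.negSupp_nonempty hu hu0) hdiff
  exact hL.not_adj_posSupp_negSupp hw hw0 hwb b (hwp ▸ Or.inr hb) a (hwn ▸ Or.inl ha) hab.symm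

theorem not_adj_posSupp_diff [Finite V] (hL : Semivalid G L) (hy : y ∈ L)
    (hbroken : ¬ (G.induce (posSupp y)).Connected) (hu : u ∈ L) (hu0 : u ≠ 0)
    (hpos : posSupp u ⊆ posSupp y) (hneg : negSupp u ⊆ negSupp y) :
    ∀ a ∈ posSupp u, ∀ b ∈ posSupp y \ posSupp u, ¬ G.Adj a b := by
  intro a ha b hb hab
  have hy0 : y ≠ 0 := ne_zero_of_posSupp_nonempty ⟨b, hb.1⟩
  have hnegEq := negSupp_eq_of_dominated hL hy hbroken hu hu0 hpos hneg
  obtain ⟨c, hwp, hwn⟩ := (eventually_signs_smul_sub u y).exists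
  have hw : -(c • u - y) ∈ L := L.neg_mem (L.sub_mem (L.smul_mem c hu) hy)
  have hwp' : posSupp (-(c • u - y)) = negSupp y ∪ (posSupp y \ posSupp u) := by
    rw [posSupp_neg, hwn, hnegEq]
  have hwn' : posSupp u ⊆ negSupp (-(c • u - y)) := by
    rw [negSupp_neg, hwp]
    exact subset_union_left
  have hwb : ¬ (G.induce (posSupp (-(c • u - y)))).Connected := hwp' ▸
    not_connected_induce_union (hL.negSupp_nonempty hy hy0) ⟨b, hb⟩
      ((disjoint_posSupp_negSupp y).symm.mono_right sdiff_subset)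
      fun a' ha' b' hb' h => hL.not_adj_posSupp_negSupp hy hy0 hbroken b' hb'.1 a' ha' h.symm
  have hw0 : -(c • u - y) ≠ 0 := ne_zero_of_posSupp_nonempty (hwp' ▸ ⟨b, Or.inr hb⟩)
  exact hL.not_adj_posSupp_negSupp hw hw0 hwb b (hwp' ▸ Or.inr hb) a (hwn' ha) hab.symm

theorem exists_connectedComponent_eq_posSupp [Finite V] (hL : Semivalid G L) (hy : y ∈ L)
    (hbroken : ¬ (G.induce (posSupp y)).Connected) (hu : u ∈ L) (hu0 : u ≠ 0)
    (hpos : posSupp u ⊆ posSupp y) (hneg : negSupp u ⊆ negSupp y)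
    (hne : posSupp u ≠ posSupp y) :
    ∃ K : (G.induce (posSupp y)).ConnectedComponent, posSupp u = Subtype.val '' K.supp := by
  have huP := hL.posSupp_nonempty hu hu0
  exact exists_connectedComponent_eq_of_not_adj
    (hL.compCount_posSupp_eq_two hy (ne_zero_of_posSupp_nonempty (huP.mono hpos)) hbroken)
    hpos huP (Set.sdiff_nonempty.2 fun h => hne (hpos.antisymm h))
    (not_adj_posSupp_diff hL hy hbroken hu hu0 hpos hneg)

theorem signs_eq_of_dominated [Finite V] (hL : Semivalid G L) (hy : y ∈ L)
    (hbroken : ¬ (G.induce (posSupp y)).Connected) (hx : x ∈ L) (hx0 : x ≠ 0)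
    (hpos : posSupp x ⊆ posSupp y) (hneg : negSupp x ⊆ negSupp y) (hne : posSupp x ≠ posSupp y)
    (hu : u ∈ L) (hu0 : u ≠ 0) (hux : posSupp u ⊆ posSupp x) (hnx : negSupp u ⊆ negSupp x) :
    posSupp u = posSupp x ∧ negSupp u = negSupp x := by
  have hnu := negSupp_eq_of_dominated hL hy hbroken hu hu0 (hux.trans hpos) (hnx.trans hneg)
  refine ⟨?_, hnu.trans (negSupp_eq_of_dominated hL hy hbroken hx hx0 hpos hneg).symm⟩
  obtain ⟨Ku, hKu⟩ := exists_connectedComponent_eq_posSupp hL hy hbroken hu hu0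
    (hux.trans hpos) (hnx.trans hneg) fun h => hne (hpos.antisymm (h ▸ hux))
  obtain ⟨Kx, hKx⟩ := exists_connectedComponent_eq_posSupp hL hy hbroken hx hx0 hpos hneg hne
  rw [hKu, hKx] at hux ⊢
  rw [ConnectedComponent.eq_of_supp_subset
    ((Set.image_subset_image_iff Subtype.val_injective).1 hux)]

end Semivalid

end

theorem stmt3_general (G : SimpleGraph V) (L : Submodule ℝ (V → ℝ))
    (hL : Semivalid G L) (x y : V → ℝ) (hx : x ∈ L) (hx0 : x ≠ 0)
    (hy : y ∈ L)
    (hbroken : ¬ (G.induce (posSupp y)).Connected)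
    (hbd : signCone L x ⊆ closure (signCone L y) \ signCone L y) :
    negSupp x = negSupp y ∧
    (∃ K : (G.induce (posSupp y)).ConnectedComponent,
      posSupp x = Subtype.val '' K.supp) ∧
    coneDim L x = 1 := by
  obtain ⟨hcl, hnot⟩ := hbd ⟨hx, rfl, rfl⟩
  have hpos := posSupp_subset_of_mem_closure hcl
  have hneg := negSupp_subset_of_mem_closure hcl
  have hnegEq := hL.negSupp_eq_of_dominated hy hbroken hx hx0 hpos hneg
  have hne : posSupp x ≠ posSupp y := fun h => hnot ⟨hx, h, hnegEq⟩
  exact ⟨hnegEq, hL.exists_connectedComponent_eq_posSupp hy hbroken hx hx0 hpos hneg hne,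
    coneDim_eq_one_of_minimal hx hx0 fun _ hu hu0 =>
      hL.signs_eq_of_dominated hy hbroken hx hx0 hpos hneg hne hu hu0⟩

/-- if `α = signCone L x` lies in the boundary of a broken cone
`β = signCone L y`, then (i) the negative supports agree, (ii) the positive support
of `α` is a single connected component of `G[supp₊(β)]`, (iii) `α` is 1-dimensional. -/
theorem stmt3 (G : SimpleGraph V) (hG : G.Connected) (L : Submodule ℝ (V → ℝ))
    (hL : Semivalid G L) (x y : V → ℝ) (hx : x ∈ L) (hx0 : x ≠ 0)
    (hy : y ∈ L) (hy0 : y ≠ 0)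
    (hbroken : ¬ (G.induce (posSupp y)).Connected)
    (hbd : signCone L x ⊆ closure (signCone L y) \ signCone L y) :
    negSupp x = negSupp y ∧
    (∃ K : (G.induce (posSupp y)).ConnectedComponent,
      posSupp x = Subtype.val '' K.supp) ∧
    coneDim L x = 1 :=
  stmt3_general G L hL x y hx hx0 hy hbroken hbd
end

section
/- Let L be a semivalid representation of a connected graph G, β a broken cone of the fan P(L), S(β) = N(supp(β)) and R(β) = V \ (supp(β) ∪ S(β)). Then for every x ∈ L with x vanishing on S(β), x also vanishes on R(β). -/
open Matrix Set

variable {V : Type*} [Fintype V] [DecidableEq V]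

/-!
Let `x` vanish on `S(β) = N(supp y)` and suppose `x v < 0` at some `v ∈ R(β)`. For large `t`,
`u = x + t y` has the signs of `y` on `supp y` and those of `x` elsewhere. Since `x` vanishes on
`S(β)`, no edge joins `supp y` to the rest of `supp u`. Hence the positive support of `u` is
disconnected (that of `y` is), and its negative support contains both `negSupp y` and `v`
with no edge between them, so it is disconnected too: this contradicts semivalidity.
-/

omit [Fintype V] [DecidableEq V] in
lemma reachable_induce_of_reachable_induce_union {G : SimpleGraph V} {A B : Set V}
    (hAB : ∀ a ∈ A, ∀ b ∈ B, ¬ G.Adj a b) {a b : ↑(A ∪ B)}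
    (h : (G.induce (A ∪ B)).Reachable a b) (ha : a.1 ∈ A) :
    ∃ hb : b.1 ∈ A, (G.induce A).Reachable ⟨a, ha⟩ ⟨b, hb⟩ := by
  obtain ⟨w⟩ := h
  induction w with
  | nil => exact ⟨ha, .rfl⟩
  | @cons a c b hac _ ih =>
    have hcA : c.1 ∈ A := c.2.resolve_right fun hcB => hAB a ha c hcB hac
    obtain ⟨hb, hcb⟩ := ih hcA
    exact ⟨hb, (show (G.induce A).Adj ⟨a, ha⟩ ⟨c, hcA⟩ from hac).reachable.trans hcb⟩

omit [Fintype V] [DecidableEq V] in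
lemma not_preconnected_induce_union {G : SimpleGraph V} {A B : Set V}
    (hAB : ∀ a ∈ A, ∀ b ∈ B, ¬ G.Adj a b) (hA : ¬ (G.induce A).Preconnected) :
    ¬ (G.induce (A ∪ B)).Preconnected := by
  intro hconn
  exact hA fun a b =>
    (reachable_induce_of_reachable_induce_union hAB (hconn ⟨a, .inl a.2⟩ ⟨b, .inl b.2⟩) a.2).2

omit [Fintype V] [DecidableEq V] in
lemma mem_of_preconnected_induce_union {G : SimpleGraph V} {A B : Set V}
    (hAB : ∀ a ∈ A, ∀ b ∈ B, ¬ G.Adj a b) (hconn : (G.induce (A ∪ B)).Preconnected)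
    {a b : V} (ha : a ∈ A) (hb : b ∈ B) : b ∈ A :=
  (reachable_induce_of_reachable_induce_union hAB (hconn ⟨a, .inl ha⟩ ⟨b, .inr hb⟩) ha).1

omit [DecidableEq V] in
lemma exists_signs_add_smul (x y : V → ℝ) : ∃ t : ℝ,
    posSupp (x + t • y) = posSupp y ∪ (posSupp x \ supp y) ∧
    negSupp (x + t • y) = negSupp y ∪ (negSupp x \ supp y) := by
  set t : ℝ := 1 + ∑ w, |x w| / |y w|
  have hdom : ∀ w, y w ≠ 0 → |x w| < t * |y w| := by
    intro w hyw
    rw [← div_lt_iff₀ (abs_pos.2 hyw)]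
    have := Finset.single_le_sum (f := fun w => |x w| / |y w|)
      (fun _ _ => by positivity) (Finset.mem_univ w)
    linarith
  have hpos : ∀ w, 0 < y w → 0 < x w + t * y w := fun w hyw => by
    have := hdom w hyw.ne'
    rw [abs_of_pos hyw] at this
    linarith [neg_abs_le (x w)]
  have hneg : ∀ w, y w < 0 → x w + t * y w < 0 := fun w hyw => by
    have := hdom w hyw.ne
    rw [abs_of_neg hyw] at this
    linarith [le_abs_self (x w)]
  refine ⟨t, ?_, ?_⟩ <;> ext w <;>
    simp only [posSupp, negSupp, supp, Set.mem_union, Set.mem_sdiff, Set.mem_ofPred_eq,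
      Pi.add_apply, Pi.smul_apply, smul_eq_mul, not_not] <;>
    rcases lt_trichotomy (y w) 0 with hyw | hyw | hyw
  · simp [hyw.ne, hyw.not_gt, (hneg w hyw).not_gt]
  · simp [hyw]
  · simp [hyw, hpos w hyw]
  · simp [hyw, hneg w hyw]
  · simp [hyw]
  · simp [hyw.ne', hyw.not_gt, (hpos w hyw).not_gt]

omit [DecidableEq V] in
lemma Semivalid.nonneg_outside_supp_union_nbhd {G : SimpleGraph V} {L : Submodule ℝ (V → ℝ)}
    (hL : Semivalid G L) {y : V → ℝ} (hy : y ∈ L) (hy0 : y ≠ 0)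
    (hbroken : ¬ (G.induce (posSupp y)).Connected)
    {x : V → ℝ} (hx : x ∈ L) (hS : ∀ v ∈ nbhd G (supp y), x v = 0)
    {v : V} (hv : v ∉ supp y ∪ nbhd G (supp y)) : 0 ≤ x v := by
  by_contra! hxv
  obtain ⟨⟨⟨p, hp⟩, ⟨n, hn⟩⟩, -⟩ := hL y hy hy0
  obtain ⟨t, hpos, hneg⟩ := exists_signs_add_smul x y
  have hsep : ∀ a ∈ supp y, ∀ b, b ∉ supp y → x b ≠ 0 → ¬ G.Adj a b :=
    fun a ha b hb hxb hab => hxb (hS b ⟨hb, a, ha, hab⟩)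
  have hu0 : x + t • y ≠ 0 := fun hu => by
    have hp' : p ∈ posSupp (x + t • y) := hpos ▸ .inl hp
    rw [hu] at hp'
    exact lt_irrefl (0 : ℝ) hp'
  rcases (hL _ (L.add_mem hx (L.smul_mem t hy)) hu0).2.1 with hconn | ⟨-, hconn⟩
  · rw [hpos] at hconn
    have : Nonempty (posSupp y) := ⟨⟨p, hp⟩⟩
    exact not_preconnected_induce_union (fun a ha b hb => hsep a ha.ne' b hb.2 hb.1.ne')
      (fun hpre => hbroken ⟨hpre⟩) hconn.preconnected
  · rw [hneg] at hconn
    have hvy := mem_of_preconnected_induce_union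
      (fun a ha b hb => hsep a ha.ne b hb.2 hb.1.ne) hconn.preconnected hn
      ⟨hxv, fun h => hv (.inl h)⟩
    exact hv (.inl hvy.ne)

theorem stmt5_general (G : SimpleGraph V) (L : Submodule ℝ (V → ℝ))
    (hL : Semivalid G L) (y : V → ℝ) (hy : y ∈ L) (hy0 : y ≠ 0)
    (hbroken : ¬ (G.induce (posSupp y)).Connected)
    (x : V → ℝ) (hx : x ∈ L) (hS : ∀ v ∈ nbhd G (supp y), x v = 0) :
    ∀ v, v ∉ supp y ∪ nbhd G (supp y) → x v = 0 := by
  intro v hv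
  have hnonneg := hL.nonneg_outside_supp_union_nbhd hy hy0 hbroken hx hS hv
  have hnonpos := hL.nonneg_outside_supp_union_nbhd hy hy0 hbroken (L.neg_mem hx)
    (fun w hw => by simp [hS w hw]) hv
  exact le_antisymm (by simpa using hnonpos) hnonneg

/-- for a broken cone `β = signCone L y`, with `S(β) = N(supp(β))` and
`R(β) = V \ (supp(β) ∪ S(β))`, every `x ∈ L` vanishing on `S(β)` also vanishes on `R(β)`. -/
theorem stmt5 (G : SimpleGraph V) (hG : G.Connected) (L : Submodule ℝ (V → ℝ))
    (hL : Semivalid G L) (y : V → ℝ) (hy : y ∈ L) (hy0 : y ≠ 0)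
    (hbroken : ¬ (G.induce (posSupp y)).Connected)
    (x : V → ℝ) (hx : x ∈ L) (hS : ∀ v ∈ nbhd G (supp y), x v = 0) :
    ∀ v, v ∉ supp y ∪ nbhd G (supp y) → x v = 0 :=
  stmt5_general G L hL y hy hy0 hbroken x hx hS
end

section
/- Let G be a connected graph with maximum degree at most d, M ∈ M(G), and x ∈ ker(M) a broken vector (i.e. G[supp_+(x)] disconnected). Then G[supp(x)] has at most d connected components, and if it has exactly d components, then G[V \ supp(x)] has no edges and V \ supp(x) = N(supp(x)). -/
open Matrix Set

variable {V : Type*} [Fintype V] [DecidableEq V]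

/-!
Let `λ₀ < 0` be the unique negative eigenvalue of `M`. Since the off-diagonal entries of `M` are
`≤ 0`, replacing a `λ₀`-eigenvector `v` by `|v|` does not increase the Rayleigh quotient, so `|v|`
is again a `λ₀`-eigenvector and, `G` being connected, it is positive (Perron–Frobenius). Call it
`w`. Then `x ⊥ w`, and the quadratic form of `M` is positive semidefinite on `w⊥`, with null
vectors in `ker M`. Consequently, if `y₁, y₂` have nonpositive `M`-forms and vanishing mixed terms,
the vector `(w⬝y₂) y₁ - (w⬝y₁) y₂ ∈ w⊥` lies in `ker M`.

Applied to the restrictions of `x` to a component of `G[supp₊ x]` and to the rest of `supp₊ x`,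
this shows that no edge joins `supp₊ x` and `supp₋ x`. Each component of `G[supp x]` then has a
sign, and applied to the restrictions of `x` to two such components `C, C'` it shows that a vertex
outside `supp x` sees `C` iff it sees `C'`. So any `u ∈ N(supp x)` has a neighbour in every
component: there are at most `deg u ≤ d` of them, and if there are exactly `d`, then `u` has no
neighbour outside `supp x`, which forces `V ∖ supp x = N(supp x)` to be independent.
-/

namespace Matrix

variable {n : Type*} [Fintype n]

def PosSemidefOnOrthogonal (M : Matrix n n ℝ) (w : n → ℝ) : Prop :=
  ∀ y, w ⬝ᵥ y = 0 → 0 ≤ y ⬝ᵥ M *ᵥ y ∧ (y ⬝ᵥ M *ᵥ y = 0 → M *ᵥ y = 0)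

lemma dotProduct_eq_zero_of_mulVec_eq_smul {M : Matrix n n ℝ} (hM : M.IsSymm) {w x : n → ℝ} {μ : ℝ}
    (hw : M *ᵥ w = μ • w) (hμ : μ ≠ 0) (hx : M *ᵥ x = 0) : w ⬝ᵥ x = 0 := by
  have h : μ * (w ⬝ᵥ x) = w ⬝ᵥ M *ᵥ x := by
    rw [dotProduct_mulVec, ← mulVec_transpose, hM.eq, hw, smul_dotProduct, smul_eq_mul]
  rw [hx, dotProduct_zero] at h
  exact (mul_eq_zero.1 h).resolve_left hμ

lemma PosSemidefOnOrthogonal.mulVec_sub_eq_zero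
    {M : Matrix n n ℝ} {w : n → ℝ} (hQ : M.PosSemidefOnOrthogonal w) {y₁ y₂ : n → ℝ}
    (h₁ : y₁ ⬝ᵥ M *ᵥ y₁ ≤ 0) (h₂ : y₂ ⬝ᵥ M *ᵥ y₂ ≤ 0)
    (h₁₂ : y₁ ⬝ᵥ M *ᵥ y₂ = 0) (h₂₁ : y₂ ⬝ᵥ M *ᵥ y₁ = 0) :
    M *ᵥ ((w ⬝ᵥ y₂) • y₁ - (w ⬝ᵥ y₁) • y₂) = 0 := by
  set z := (w ⬝ᵥ y₂) • y₁ - (w ⬝ᵥ y₁) • y₂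
  have hwz : w ⬝ᵥ z = 0 := by
    simp only [z, dotProduct_sub, dotProduct_smul, smul_eq_mul]
    ring
  have hQz : z ⬝ᵥ M *ᵥ z = (w ⬝ᵥ y₂) ^ 2 * (y₁ ⬝ᵥ M *ᵥ y₁) + (w ⬝ᵥ y₁) ^ 2 * (y₂ ⬝ᵥ M *ᵥ y₂) := by
    simp only [z, mulVec_sub, mulVec_smul, dotProduct_sub, sub_dotProduct, dotProduct_smul,
      smul_dotProduct, h₁₂, h₂₁, smul_eq_mul]
    ring
  refine (hQ z hwz).2 (le_antisymm ?_ (hQ z hwz).1)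
  rw [hQz]
  nlinarith [sq_nonneg (w ⬝ᵥ y₂), sq_nonneg (w ⬝ᵥ y₁)]

namespace IsHermitian

variable [DecidableEq n] {A : Matrix n n ℝ} (hA : A.IsHermitian)

noncomputable def eigenCoords (y : n → ℝ) (i : n) : ℝ := ⇑(hA.eigenvectorBasis i) ⬝ᵥ y

lemma sum_eigenCoords_smul (y : n → ℝ) :
    ∑ i, hA.eigenCoords y i • ⇑(hA.eigenvectorBasis i) = y := by
  have := congrArg WithLp.ofLp (hA.eigenvectorBasis.sum_repr' (WithLp.toLp 2 y))
  simpa [eigenCoords, EuclideanSpace.inner_eq_star_dotProduct, dotProduct_comm] using this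

lemma eigenCoords_mulVec (y : n → ℝ) (i : n) :
    hA.eigenCoords (A *ᵥ y) i = hA.eigenvalues i * hA.eigenCoords y i := by
  rw [eigenCoords, eigenCoords, dotProduct_mulVec, ← mulVec_transpose,
    (isHermitian_iff_isSymm.1 hA).eq,
    mulVec_eigenvectorBasis, smul_dotProduct, smul_eq_mul]

lemma dotProduct_eq_sum_eigenCoords (y z : n → ℝ) :
    y ⬝ᵥ z = ∑ i, hA.eigenCoords y i * hA.eigenCoords z i := by
  conv_lhs => rw [← hA.sum_eigenCoords_smul z]
  simp [dotProduct_sum, dotProduct_smul, eigenCoords, dotProduct_comm, mul_comm]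

lemma dotProduct_mulVec_self_eq_sum (y : n → ℝ) :
    y ⬝ᵥ A *ᵥ y = ∑ i, hA.eigenvalues i * hA.eigenCoords y i ^ 2 := by
  simp only [hA.dotProduct_eq_sum_eigenCoords, eigenCoords_mulVec]
  exact Finset.sum_congr rfl fun i _ => by ring

lemma mulVec_eq_smul_of_eigenCoords {y : n → ℝ} {μ : ℝ}
    (h : ∀ i, hA.eigenvalues i * hA.eigenCoords y i = μ * hA.eigenCoords y i) :
    A *ᵥ y = μ • y := by
  rw [← hA.sum_eigenCoords_smul (A *ᵥ y), ← hA.sum_eigenCoords_smul (μ • y)]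
  refine Finset.sum_congr rfl fun i _ => ?_
  rw [eigenCoords_mulVec, h, eigenCoords, eigenCoords, dotProduct_smul, smul_eq_mul]

lemma eigenCoords_eq_zero_of_mulVec_eq_smul {y : n → ℝ} {μ : ℝ} (h : A *ᵥ y = μ • y) {i : n}
    (hi : hA.eigenvalues i ≠ μ) : hA.eigenCoords y i = 0 := by
  have := hA.eigenCoords_mulVec y i
  simp only [h, eigenCoords, dotProduct_smul, smul_eq_mul] at this ⊢
  exact (mul_eq_zero.1 (by linear_combination -this)).resolve_left (sub_ne_zero.2 hi)

lemma mulVec_eq_smul_of_dotProduct_mulVec_le {y : n → ℝ} {μ : ℝ}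
    (hμ : ∀ i, μ ≤ hA.eigenvalues i) (h : y ⬝ᵥ A *ᵥ y ≤ μ * (y ⬝ᵥ y)) : A *ᵥ y = μ • y := by
  have hterm : ∀ i ∈ Finset.univ, 0 ≤ (hA.eigenvalues i - μ) * hA.eigenCoords y i ^ 2 :=
    fun i _ => mul_nonneg (sub_nonneg.2 (hμ i)) (sq_nonneg _)
  have hsum : ∑ i, (hA.eigenvalues i - μ) * hA.eigenCoords y i ^ 2 = 0 := by
    refine le_antisymm ?_ (Finset.sum_nonneg hterm)
    rw [hA.dotProduct_mulVec_self_eq_sum, hA.dotProduct_eq_sum_eigenCoords, Finset.mul_sum] at h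
    simpa only [sub_mul, Finset.sum_sub_distrib, sub_nonpos, sq, mul_assoc] using h
  refine hA.mulVec_eq_smul_of_eigenCoords fun i => ?_
  have h0 : (hA.eigenvalues i - μ) * hA.eigenCoords y i * hA.eigenCoords y i = 0 := by
    linear_combination (Finset.sum_eq_zero_iff_of_nonneg hterm).1 hsum i (Finset.mem_univ i)
  rcases mul_eq_zero.1 h0 with h0 | h0
  · linear_combination h0
  · simp [h0]

lemma posSemidefOnOrthogonal_of_mulVec_eq_smul {i₀ : n} (hneg : hA.eigenvalues i₀ < 0)
    (hpos : ∀ i ≠ i₀, 0 ≤ hA.eigenvalues i) {w : n → ℝ}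
    (hw : A *ᵥ w = hA.eigenvalues i₀ • w) (hw0 : w ≠ 0) : PosSemidefOnOrthogonal A w := by
  have hcw : ∀ i ≠ i₀, hA.eigenCoords w i = 0 := fun i hi =>
    hA.eigenCoords_eq_zero_of_mulVec_eq_smul hw (by linarith [hpos i hi])
  have hcw₀ : hA.eigenCoords w i₀ ≠ 0 := by
    intro h0
    refine hw0 (hA.sum_eigenCoords_smul w ▸ Finset.sum_eq_zero fun i _ => ?_)
    obtain rfl | hi := eq_or_ne i i₀
    · rw [h0, zero_smul]
    · rw [hcw i hi, zero_smul]
  intro y hy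
  have hy₀ : hA.eigenCoords y i₀ = 0 := by
    rw [hA.dotProduct_eq_sum_eigenCoords, Finset.sum_eq_single i₀
      (fun i _ hi => by rw [hcw i hi, zero_mul]) (by simp)] at hy
    exact (mul_eq_zero.1 hy).resolve_left hcw₀
  have hterm : ∀ i ∈ Finset.univ, 0 ≤ hA.eigenvalues i * hA.eigenCoords y i ^ 2 := by
    intro i _
    obtain rfl | hi := eq_or_ne i i₀
    · simp [hy₀]
    · exact mul_nonneg (hpos i hi) (sq_nonneg _)
  rw [hA.dotProduct_mulVec_self_eq_sum]
  refine ⟨Finset.sum_nonneg hterm, fun hQ => ?_⟩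
  rw [← zero_smul ℝ y]
  refine hA.mulVec_eq_smul_of_eigenCoords fun i => ?_
  have h0 : hA.eigenvalues i * hA.eigenCoords y i * hA.eigenCoords y i = 0 := by
    linear_combination (Finset.sum_eq_zero_iff_of_nonneg hterm).1 hQ i (Finset.mem_univ i)
  rcases mul_eq_zero.1 h0 with h0 | h0 <;> simp [h0]

end IsHermitian

end Matrix

namespace SimpleGraph

variable {V : Type*} {G : SimpleGraph V}

lemma Reachable.mem_of_forall_adj {S : Set V} (hS : ∀ a b, G.Adj a b → a ∈ S → b ∈ S)
    {a b : V} (h : G.Reachable a b) (ha : a ∈ S) : b ∈ S := by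
  by_contra hb
  obtain ⟨p⟩ := h
  obtain ⟨d, -, hd₁, hd₂⟩ := p.exists_boundary_dart S ha hb
  exact hd₂ (hS _ _ d.adj hd₁)

namespace ConnectedComponent

variable {S : Set V} (K : (G.induce S).ConnectedComponent)

lemma mem_image_supp_of_adj (a : V) (ha : a ∈ Subtype.val '' K.supp) (b : V) (hb : b ∈ S)
    (hab : G.Adj a b) : b ∈ Subtype.val '' K.supp := by
  obtain ⟨a, haK, rfl⟩ := ha
  exact ⟨⟨b, hb⟩, (K.mem_supp_congr_adj (by simpa using hab)).1 haK, rfl⟩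

lemma image_supp_subset {P : Set V} (hP : ∀ a ∈ S, ∀ b ∈ S, G.Adj a b → a ∈ P → b ∈ P)
    {a : V} (ha : a ∈ Subtype.val '' K.supp) (haP : a ∈ P) : Subtype.val '' K.supp ⊆ P := by
  rintro _ ⟨b, hbK, rfl⟩
  obtain ⟨a, haK, rfl⟩ := ha
  have hab : (G.induce S).Reachable a b := ConnectedComponent.exact (haK.trans hbK.symm)
  exact hab.mem_of_forall_adj (S := Subtype.val ⁻¹' P)
    (fun (s t : S) hst hs => hP s s.2 t t.2 (by simpa using hst) hs) haP

lemma exists_mem_notMem_image_supp (h : ¬(G.induce S).Connected) :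
    ∃ b ∈ S, b ∉ Subtype.val '' K.supp := by
  by_contra! hall
  obtain ⟨r, rfl⟩ := K.exists_rep
  refine h ((connected_iff_exists_forall_reachable _).2 ⟨r, fun b => ConnectedComponent.exact ?_⟩)
  obtain ⟨b', hb'K, hb'⟩ := hall b b.2
  rw [← Subtype.ext hb']
  exact hb'K.symm

lemma pos_or_neg_of_not_adj {x : V → ℝ} (hS : ∀ s ∈ S, x s ≠ 0)
    (hsep : ∀ u ∈ posSupp x, ∀ t ∈ negSupp x, ¬G.Adj u t) :
    (∀ t ∈ Subtype.val '' K.supp, 0 < x t) ∨ (∀ t ∈ Subtype.val '' K.supp, x t < 0) := by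
  obtain ⟨r, hr⟩ := K.exists_rep
  have hrK : (r : V) ∈ Subtype.val '' K.supp := ⟨r, hr, rfl⟩
  rcases (hS r r.2).lt_or_gt with hneg | hpos
  · exact Or.inr (K.image_supp_subset (P := negSupp x) (fun a _ b hb hab ha =>
      (hS b hb).lt_or_gt.resolve_right fun hbp => hsep b hbp a ha hab.symm) hrK hneg)
  · exact Or.inl (K.image_supp_subset (P := posSupp x) (fun a _ b hb hab ha =>
      (hS b hb).lt_or_gt.resolve_left fun hbn => hsep a ha b hbn hab) hrK hpos)

end ConnectedComponent

lemma compCount_le_ncard_neighborSet_inter [Finite V] {S : Set V} {u : V}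
    (h : ∀ K : (G.induce S).ConnectedComponent, ∃ t ∈ Subtype.val '' K.supp, G.Adj u t) :
    compCount G S ≤ (G.neighborSet u ∩ S).ncard := by
  choose f hfK hfu using h
  choose t htK ht using hfK
  rw [compCount, ← Nat.card_coe_set_eq]
  refine Nat.card_le_card_of_injective (fun K => ⟨f K, hfu K, ht K ▸ (t K).2⟩) fun K K' hKK' => ?_
  have : t K = t K' := Subtype.ext ((ht K).trans ((congrArg Subtype.val hKK').trans (ht K').symm))
  rw [← htK K, ← htK K', this]

lemma nbhd_nonempty (hG : G.Connected) {S : Set V} {a b : V} (ha : a ∈ S) (hb : b ∉ S) :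
    (nbhd G S).Nonempty := by
  obtain ⟨p⟩ := hG.preconnected a b
  obtain ⟨d, -, hd₁, hd₂⟩ := p.exists_boundary_dart S ha hb
  exact ⟨d.snd, hd₂, d.fst, hd₁, d.adj⟩

lemma compl_eq_nbhd_of_forall_adj (hG : G.Connected) {S : Set V} {a : V} (ha : a ∈ S)
    (h : ∀ u ∈ nbhd G S, ∀ v, G.Adj u v → v ∈ S) :
    (∀ u v, u ∉ S → v ∉ S → ¬G.Adj u v) ∧ Sᶜ = nbhd G S := by
  have hcover : ∀ v, v ∈ S ∪ nbhd G S := by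
    refine fun v => (hG.preconnected a v).mem_of_forall_adj (fun u v huv hu => ?_) (Or.inl ha)
    rcases hu with hu | hu
    · by_cases hv : v ∈ S
      exacts [Or.inl hv, Or.inr ⟨hv, u, hu, huv⟩]
    · exact Or.inl (h u hu v huv)
  have hcompl : Sᶜ = nbhd G S :=
    Set.ext fun v => ⟨fun hv => (hcover v).resolve_left hv, fun hv => hv.1⟩
  exact ⟨fun u v hu hv huv => hv (h u (hcompl ▸ hu) v huv), hcompl⟩

end SimpleGraph

lemma indicator_supp {V : Type*} (x : V → ℝ) : (supp x).indicator x = x :=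
  Set.indicator_support

lemma indicator_posSupp_add_indicator_negSupp {V : Type*} (x : V → ℝ) :
    (posSupp x).indicator x + (negSupp x).indicator x = x := by
  ext t
  simp only [Pi.add_apply, Set.indicator_apply, posSupp, negSupp, Set.mem_ofPred_eq]
  split_ifs <;> linarith

section Vectors

variable {V : Type*} [Fintype V] {w x y : V → ℝ} {S : Set V}

lemma posSupp_nonempty_of_dotProduct_eq_zero (hw : ∀ u, 0 < w u) (h : w ⬝ᵥ x = 0)
    (hx : x ≠ 0) : (posSupp x).Nonempty := by
  by_contra hpos
  have hle : ∀ t ∈ Finset.univ, w t * x t ≤ 0 := fun t _ =>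
    mul_nonpos_of_nonneg_of_nonpos (hw t).le (not_lt.1 fun ht => hpos ⟨t, ht⟩)
  refine hx (funext fun u => ?_)
  have := (Finset.sum_eq_zero_iff_of_nonpos hle).1 h u (Finset.mem_univ u)
  exact (mul_eq_zero.1 this).resolve_left (hw u).ne'

lemma dotProduct_indicator_ne_zero (hw : ∀ u, 0 < w u)
    (hy : (∀ t ∈ S, 0 < y t) ∨ (∀ t ∈ S, y t < 0)) (hS : S.Nonempty) :
    w ⬝ᵥ S.indicator y ≠ 0 := by
  wlog hpos : ∀ t ∈ S, 0 < y t generalizing y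
  · have hneg := hy.resolve_left hpos
    have := this (y := -y) (Or.inl fun t ht => neg_pos.2 (hneg t ht))
      fun t ht => neg_pos.2 (hneg t ht)
    rwa [indicator_neg', dotProduct_neg, neg_ne_zero] at this
  obtain ⟨s, hs⟩ := hS
  refine (Finset.sum_pos' (fun t _ => ?_) ⟨s, Finset.mem_univ s, ?_⟩).ne'
  · by_cases ht : t ∈ S
    · rw [indicator_of_mem ht]
      exact mul_nonneg (hw t).le (hpos t ht).le
    · rw [indicator_of_notMem ht, mul_zero]
  · rw [indicator_of_mem hs]
    exact mul_pos (hw s) (hpos s hs)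

end Vectors

structure HasSignPattern {V : Type*} (G : SimpleGraph V) (M : Matrix V V ℝ) : Prop where
  adj_neg : ∀ u v, G.Adj u v → M u v < 0
  nonadj_zero : ∀ u v, u ≠ v → ¬G.Adj u v → M u v = 0

lemma CdVMatrix.hasSignPattern {G : SimpleGraph V} {M : Matrix V V ℝ} (hM : CdVMatrix G M) :
    HasSignPattern G M :=
  ⟨hM.edge_neg, hM.nonedge_zero⟩

namespace HasSignPattern

variable {V : Type*} {G : SimpleGraph V} {M : Matrix V V ℝ}

lemma apply_nonpos (hP : HasSignPattern G M) {u v : V} (h : u ≠ v) : M u v ≤ 0 := by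
  by_cases hadj : G.Adj u v
  exacts [(hP.adj_neg u v hadj).le, (hP.nonadj_zero u v h hadj).le]

variable {S : Set V} {u : V}

lemma mul_indicator_nonneg (hP : HasSignPattern G M) {y : V → ℝ} (hy : ∀ t ∈ S, y t ≤ 0)
    (hu : u ∉ S) (t : V) : 0 ≤ M u t * S.indicator y t := by
  by_cases ht : t ∈ S
  · rw [indicator_of_mem ht]
    exact mul_nonneg_of_nonpos_of_nonpos (hP.apply_nonpos fun hut => hu (hut ▸ ht)) (hy t ht)
  · rw [indicator_of_notMem ht, mul_zero]

variable [Fintype V]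

lemma mulVec_indicator_apply_eq_zero (hP : HasSignPattern G M) (hu : u ∉ S)
    (h : ∀ t ∈ S, ¬G.Adj u t) (y : V → ℝ) : (M *ᵥ S.indicator y) u = 0 := by
  simp only [mulVec, dotProduct]
  refine Finset.sum_eq_zero fun t _ => ?_
  by_cases ht : t ∈ S
  · rw [hP.nonadj_zero u t (fun hut => hu (hut ▸ ht)) (h t ht), zero_mul]
  · rw [indicator_of_notMem ht, mul_zero]

lemma mulVec_indicator_apply_eq_of_closed (hP : HasSignPattern G M) {C T : Set V} (hCT : C ⊆ T)
    (hC : ∀ a ∈ C, ∀ b ∈ T, G.Adj a b → b ∈ C) (hu : u ∈ C) (y : V → ℝ) :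
    (M *ᵥ C.indicator y) u = (M *ᵥ T.indicator y) u := by
  have := hP.mulVec_indicator_apply_eq_zero (S := T \ C) (fun h => h.2 hu)
    (fun t ht hut => ht.2 (hC u hu t ht.1 hut)) y
  rw [indicator_sdiff hCT, mulVec_sub, Pi.sub_apply, sub_eq_zero] at this
  exact this.symm

lemma mulVec_indicator_apply_nonneg (hP : HasSignPattern G M) {y : V → ℝ}
    (hy : ∀ t ∈ S, y t ≤ 0) (hu : u ∉ S) : 0 ≤ (M *ᵥ S.indicator y) u :=
  Finset.sum_nonneg fun t _ => hP.mul_indicator_nonneg hy hu t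

lemma mulVec_indicator_apply_eq_zero_iff (hP : HasSignPattern G M) {y : V → ℝ}
    (hy : (∀ t ∈ S, 0 < y t) ∨ (∀ t ∈ S, y t < 0)) (hu : u ∉ S) :
    (M *ᵥ S.indicator y) u = 0 ↔ ∀ t ∈ S, ¬G.Adj u t := by
  wlog hneg : ∀ t ∈ S, y t < 0 generalizing y
  · have hpos := hy.resolve_right hneg
    have := this (y := -y) (Or.inr fun t ht => neg_lt_zero.2 (hpos t ht))
      fun t ht => neg_lt_zero.2 (hpos t ht)
    rwa [indicator_neg', mulVec_neg, Pi.neg_apply, neg_eq_zero] at this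
  refine ⟨fun h t ht hut => ?_, fun h => hP.mulVec_indicator_apply_eq_zero hu h y⟩
  have := (Finset.sum_eq_zero_iff_of_nonneg fun t _ =>
    hP.mul_indicator_nonneg (fun t ht => (hneg t ht).le) hu t).1 h t (Finset.mem_univ t)
  rw [indicator_of_mem ht] at this
  exact (mul_pos_of_neg_of_neg (hP.adj_neg u t hut) (hneg t ht)).ne' this

lemma pos_of_mulVec_eq_smul (hP : HasSignPattern G M) (hG : G.Connected) {a : V → ℝ} {μ : ℝ}
    (ha : ∀ u, 0 ≤ a u) (ha0 : a ≠ 0) (h : M *ᵥ a = μ • a) (u : V) : 0 < a u := by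
  have hzero : ∀ p q, G.Adj p q → a p = 0 → a q = 0 := by
    intro p q hpq hp
    have hMa : (M *ᵥ (supp a).indicator a) p = 0 := by
      rw [indicator_supp, h, Pi.smul_apply, hp, smul_zero]
    by_contra hq
    exact (hP.mulVec_indicator_apply_eq_zero_iff (Or.inl fun t ht => (ha t).lt_of_ne (Ne.symm ht))
      (not_not.2 hp)).1 hMa q hq hpq
  refine (ha u).lt_of_ne fun hu => ha0 (funext fun v => ?_)
  exact (hG.preconnected u v).mem_of_forall_adj (S := {p | a p = 0}) hzero hu.symm

lemma dotProduct_mulVec_abs_le (hP : HasSignPattern G M) (v : V → ℝ) :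
    |v| ⬝ᵥ M *ᵥ |v| ≤ v ⬝ᵥ M *ᵥ v := by
  simp only [dotProduct, mulVec, Finset.mul_sum, Pi.abs_apply]
  refine Finset.sum_le_sum fun u _ => Finset.sum_le_sum fun t _ => ?_
  obtain rfl | hut := eq_or_ne u t
  · rw [mul_left_comm, abs_mul_abs_self, mul_left_comm]
  · nlinarith [hP.apply_nonpos hut, le_abs_self (v u * v t), abs_mul (v u) (v t)]

variable {w x : V → ℝ}

lemma mulVec_indicator_apply_eq_neg_of_closed (hP : HasSignPattern G M) (hker : M *ᵥ x = 0)
    {A : Set V} (hA : A ⊆ posSupp x) (hAc : ∀ a ∈ A, ∀ b ∈ posSupp x, G.Adj a b → b ∈ A)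
    {u : V} (hu : u ∈ A) :
    (M *ᵥ A.indicator x) u = -(M *ᵥ (negSupp x).indicator x) u := by
  rw [hP.mulVec_indicator_apply_eq_of_closed hA hAc hu, eq_neg_iff_add_eq_zero, ← Pi.add_apply,
    ← mulVec_add, indicator_posSupp_add_indicator_negSupp, hker, Pi.zero_apply]

lemma indicator_dotProduct_mulVec_indicator_nonpos (hP : HasSignPattern G M)
    (hker : M *ᵥ x = 0) {A : Set V} (hA : A ⊆ posSupp x)
    (hAc : ∀ a ∈ A, ∀ b ∈ posSupp x, G.Adj a b → b ∈ A) :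
    A.indicator x ⬝ᵥ M *ᵥ A.indicator x ≤ 0 := by
  refine Finset.sum_nonpos fun u _ => ?_
  by_cases hu : u ∈ A
  · rw [indicator_of_mem hu, hP.mulVec_indicator_apply_eq_neg_of_closed hker hA hAc hu]
    exact mul_nonpos_of_nonneg_of_nonpos (hA hu).le <| neg_nonpos.2 <|
      hP.mulVec_indicator_apply_nonneg (fun t ht => ht.le) fun h =>
        lt_asymm (show x u < 0 from h) (hA hu)
  · rw [indicator_of_notMem hu, zero_mul]

lemma indicator_dotProduct_mulVec_indicator_eq_zero (hP : HasSignPattern G M) {C D : Set V}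
    (hCD : ∀ a ∈ C, ∀ b ∈ D, ¬G.Adj a b) (hdisj : Disjoint C D) (y z : V → ℝ) :
    C.indicator y ⬝ᵥ M *ᵥ D.indicator z = 0 := by
  refine Finset.sum_eq_zero fun u _ => ?_
  by_cases hu : u ∈ C
  · rw [hP.mulVec_indicator_apply_eq_zero (Set.disjoint_left.1 hdisj hu) (hCD u hu) z, mul_zero]
  · rw [indicator_of_notMem hu, zero_mul]

theorem not_adj_negSupp_of_closed (hP : HasSignPattern G M) (hw : ∀ u, 0 < w u)
    (hQ : M.PosSemidefOnOrthogonal w) (hker : M *ᵥ x = 0) {A : Set V} (hA : A ⊆ posSupp x)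
    (hAc : ∀ a ∈ A, ∀ b ∈ posSupp x, G.Adj a b → b ∈ A) {b : V} (hb : b ∈ posSupp x)
    (hbA : b ∉ A) : ∀ a ∈ A, ∀ t ∈ negSupp x, ¬G.Adj a t := by
  set B := posSupp x \ A
  have hBc : ∀ a ∈ B, ∀ b ∈ posSupp x, G.Adj a b → b ∈ B := fun a ha b hb hab =>
    ⟨hb, fun hbA => ha.2 (hAc b hbA a ha.1 hab.symm)⟩
  have hAB : ∀ a ∈ A, ∀ b ∈ B, ¬G.Adj a b := fun a ha b hb hab => hb.2 (hAc a ha b hb.1 hab)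
  have hz := hQ.mulVec_sub_eq_zero (hP.indicator_dotProduct_mulVec_indicator_nonpos hker hA hAc)
    (hP.indicator_dotProduct_mulVec_indicator_nonpos hker sdiff_subset hBc)
    (hP.indicator_dotProduct_mulVec_indicator_eq_zero hAB disjoint_sdiff_right x x)
    (hP.indicator_dotProduct_mulVec_indicator_eq_zero (fun b hb a ha hba => hAB a ha b hb hba.symm)
      disjoint_sdiff_left x x)
  intro a ha t ht hat
  have hMA : (M *ᵥ A.indicator x) a = 0 := by
    have := congrFun hz a
    rw [mulVec_sub, mulVec_smul, mulVec_smul, Pi.sub_apply, Pi.smul_apply, Pi.smul_apply,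
      hP.mulVec_indicator_apply_eq_zero (fun h => h.2 ha) (hAB a ha) x, smul_zero, sub_zero,
      Pi.zero_apply, smul_eq_mul] at this
    exact (mul_eq_zero.1 this).resolve_left
      (dotProduct_indicator_ne_zero hw (Or.inl fun t ht => ht.1) ⟨b, hb, hbA⟩)
  rw [hP.mulVec_indicator_apply_eq_neg_of_closed hker hA hAc ha, neg_eq_zero,
    hP.mulVec_indicator_apply_eq_zero_iff (S := negSupp x) (Or.inr fun t ht => ht)
      fun h => lt_asymm (show x a < 0 from h) (hA ha)]
    at hMA
  exact hMA t ht hat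

theorem not_adj_posSupp_negSupp (hP : HasSignPattern G M) (hw : ∀ u, 0 < w u)
    (hQ : M.PosSemidefOnOrthogonal w) (hker : M *ᵥ x = 0)
    (hbroken : ¬(G.induce (posSupp x)).Connected) :
    ∀ u ∈ posSupp x, ∀ t ∈ negSupp x, ¬G.Adj u t := by
  intro u hu
  set K := (G.induce (posSupp x)).connectedComponentMk ⟨u, hu⟩
  obtain ⟨b, hb, hbK⟩ := K.exists_mem_notMem_image_supp hbroken
  exact hP.not_adj_negSupp_of_closed hw hQ hker (Subtype.coe_image_subset _ _)
    K.mem_image_supp_of_adj hb hbK u ⟨⟨u, hu⟩, rfl, rfl⟩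

lemma mulVec_indicator_apply_eq_zero_of_closed (hP : HasSignPattern G M) (hker : M *ᵥ x = 0)
    {C : Set V} (hC : C ⊆ supp x) (hCc : ∀ a ∈ C, ∀ b ∈ supp x, G.Adj a b → b ∈ C) {v : V}
    (hv : v ∈ supp x) : (M *ᵥ C.indicator x) v = 0 := by
  by_cases hvC : v ∈ C
  · rw [hP.mulVec_indicator_apply_eq_of_closed hC hCc hvC, indicator_supp, hker, Pi.zero_apply]
  · exact hP.mulVec_indicator_apply_eq_zero hvC (fun t ht hvt => hvC (hCc t ht v hv hvt.symm)) x

theorem nbhd_subset_nbhd (hP : HasSignPattern G M) (hw : ∀ u, 0 < w u)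
    (hQ : M.PosSemidefOnOrthogonal w) (hker : M *ᵥ x = 0)
    (hsep : ∀ u ∈ posSupp x, ∀ t ∈ negSupp x, ¬G.Adj u t)
    (K K' : (G.induce (supp x)).ConnectedComponent) :
    nbhd G (Subtype.val '' K.supp) ⊆ nbhd G (Subtype.val '' K'.supp) := by
  have hcross : ∀ K K' : (G.induce (supp x)).ConnectedComponent,
      (Subtype.val '' K.supp).indicator x ⬝ᵥ M *ᵥ (Subtype.val '' K'.supp).indicator x = 0 := by
    refine fun K K' => Finset.sum_eq_zero fun v _ => ?_
    by_cases hv : v ∈ supp x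
    · rw [hP.mulVec_indicator_apply_eq_zero_of_closed hker (Subtype.coe_image_subset _ _)
        K'.mem_image_supp_of_adj hv, mul_zero]
    · rw [indicator_of_notMem (fun h => hv (Subtype.coe_image_subset _ _ h)), zero_mul]
  have hz := hQ.mulVec_sub_eq_zero (hcross K K).le (hcross K' K').le (hcross K K') (hcross K' K)
  have hsign := fun K : (G.induce (supp x)).ConnectedComponent =>
    K.pos_or_neg_of_not_adj (fun _ hs => hs) hsep
  rintro u ⟨huK, t, htK, htu⟩
  have hu : u ∉ supp x := fun hu => huK (K.mem_image_supp_of_adj t htK u hu htu)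
  have huK' : u ∉ Subtype.val '' K'.supp := fun h => hu (Subtype.coe_image_subset _ _ h)
  have hMK : (M *ᵥ (Subtype.val '' K.supp).indicator x) u ≠ 0 := fun h =>
    (hP.mulVec_indicator_apply_eq_zero_iff (hsign K) huK).1 h t htK htu.symm
  have hMK' : (M *ᵥ (Subtype.val '' K'.supp).indicator x) u ≠ 0 := by
    intro h
    have := congrFun hz u
    rw [mulVec_sub, mulVec_smul, mulVec_smul, Pi.sub_apply, Pi.smul_apply, Pi.smul_apply, h,
      smul_zero, sub_zero, smul_eq_mul, Pi.zero_apply] at this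
    exact mul_ne_zero (dotProduct_indicator_ne_zero hw (hsign K') (K'.nonempty_supp.image _))
      hMK this
  obtain ⟨t', ht'K', hut'⟩ :=
    not_forall₂.1 (mt (hP.mulVec_indicator_apply_eq_zero_iff (hsign K') huK').2 hMK')
  exact ⟨huK', t', ht'K', (not_not.1 hut').symm⟩

end HasSignPattern

theorem CdVMatrix.exists_pos_posSemidefOnOrthogonal {G : SimpleGraph V} {M : Matrix V V ℝ}
    (hM : CdVMatrix G M) (hG : G.Connected) :
    ∃ w : V → ℝ, (∀ u, 0 < w u) ∧ (∀ x, M *ᵥ x = 0 → w ⬝ᵥ x = 0) ∧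
      M.PosSemidefOnOrthogonal w := by
  obtain ⟨i₀, hi₀⟩ := Set.ncard_eq_one.1 hM.one_neg
  have hneg : hM.herm.eigenvalues i₀ < 0 := (Set.ext_iff.1 hi₀ i₀).2 rfl
  have hpos : ∀ i ≠ i₀, 0 ≤ hM.herm.eigenvalues i := fun i hi =>
    not_lt.1 fun h => hi ((Set.ext_iff.1 hi₀ i).1 h)
  set v : V → ℝ := ⇑(hM.herm.eigenvectorBasis i₀)
  have hv0 : |v| ≠ 0 := fun h => hM.herm.eigenvectorBasis.orthonormal.ne_zero i₀
    (PiLp.ext fun u => abs_eq_zero.1 (congrFun h u))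
  have heig : M *ᵥ |v| = hM.herm.eigenvalues i₀ • |v| := by
    refine hM.herm.mulVec_eq_smul_of_dotProduct_mulVec_le (fun i => ?_) ?_
    · obtain rfl | hi := eq_or_ne i i₀
      exacts [le_rfl, hneg.le.trans (hpos i hi)]
    calc |v| ⬝ᵥ M *ᵥ |v| ≤ v ⬝ᵥ M *ᵥ v := hM.hasSignPattern.dotProduct_mulVec_abs_le v
      _ = hM.herm.eigenvalues i₀ * (v ⬝ᵥ v) := by
        rw [hM.herm.mulVec_eigenvectorBasis, dotProduct_smul, smul_eq_mul]
      _ = hM.herm.eigenvalues i₀ * (|v| ⬝ᵥ |v|) := by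
        simp only [dotProduct, Pi.abs_apply, abs_mul_abs_self]
  refine ⟨|v|, hM.hasSignPattern.pos_of_mulVec_eq_smul hG (fun u => abs_nonneg (v u)) hv0 heig,
    fun x hx => dotProduct_eq_zero_of_mulVec_eq_smul (isHermitian_iff_isSymm.1 hM.herm)
      heig hneg.ne hx,
    hM.herm.posSemidefOnOrthogonal_of_mulVec_eq_smul hneg hpos heig hv0⟩

lemma nbhd_supp_nonempty {V : Type*} {G : SimpleGraph V} {x : V → ℝ} (hG : G.Connected)
    (hsep : ∀ u ∈ posSupp x, ∀ t ∈ negSupp x, ¬G.Adj u t) {p n : V} (hp : p ∈ posSupp x)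
    (hn : n ∈ negSupp x) : (nbhd G (supp x)).Nonempty := by
  obtain ⟨b, hb⟩ : ∃ b, b ∉ supp x := by
    by_contra! h
    refine lt_asymm (show x n < 0 from hn) ((hG.preconnected p n).mem_of_forall_adj
      (S := posSupp x) (fun a b hab ha => ?_) hp)
    exact (show x b ≠ 0 from h b).lt_or_gt.resolve_left fun hb => hsep a ha b hb hab
  exact SimpleGraph.nbhd_nonempty hG (show x p ≠ 0 from hp.ne') hb

/-- for `G` connected of maximum degree ≤ d and a broken kernel vector `x`
of `M ∈ M(G)`, `G[supp(x)]` has at most `d` components; if exactly `d`, then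
`G[V ∖ supp(x)]` has no edges and `V ∖ supp(x) = N(supp(x))`. -/
theorem stmt8 (G : SimpleGraph V) (hG : G.Connected) (d : ℕ)
    (hd : ∀ v, (G.neighborSet v).ncard ≤ d)
    (M : Matrix V V ℝ) (hM : CdVMatrix G M)
    (x : V → ℝ) (hker : M.mulVec x = 0) (hx0 : x ≠ 0)
    (hbroken : ¬ (G.induce (posSupp x)).Connected) :
    compCount G (supp x) ≤ d ∧
    (compCount G (supp x) = d →
      (∀ u v, u ∉ supp x → v ∉ supp x → ¬ G.Adj u v) ∧
      (supp x)ᶜ = nbhd G (supp x)) := by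
  obtain ⟨w, hw, hwker, hQ⟩ := hM.exists_pos_posSemidefOnOrthogonal hG
  have hP := hM.hasSignPattern
  have hsep := hP.not_adj_posSupp_negSupp hw hQ hker hbroken
  obtain ⟨p, hp⟩ := posSupp_nonempty_of_dotProduct_eq_zero hw (hwker x hker) hx0
  obtain ⟨n, hn⟩ := posSupp_nonempty_of_dotProduct_eq_zero hw
    (by rw [dotProduct_neg, hwker x hker, neg_zero]) (neg_ne_zero.2 hx0)
  have hcount : ∀ u ∈ nbhd G (supp x), compCount G (supp x) ≤ (G.neighborSet u ∩ supp x).ncard := by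
    rintro u ⟨hu, s, hs, hsu⟩
    refine SimpleGraph.compCount_le_ncard_neighborSet_inter fun K => ?_
    obtain ⟨-, t, htK, htu⟩ := hP.nbhd_subset_nbhd hw hQ hker hsep _ K
      ⟨fun h => hu (Subtype.coe_image_subset _ _ h), s, ⟨⟨s, hs⟩, rfl, rfl⟩, hsu⟩
    exact ⟨t, htK, htu.symm⟩
  obtain ⟨u₀, hu₀⟩ := nbhd_supp_nonempty hG hsep hp (show x n < 0 from neg_pos.1 hn)
  refine ⟨(hcount u₀ hu₀).trans ((ncard_le_ncard inter_subset_left).trans (hd u₀)),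
    fun hcd => SimpleGraph.compl_eq_nbhd_of_forall_adj hG (show x p ≠ 0 from hp.ne')
      fun u hu v huv => ?_⟩
  by_contra hv
  have := (hcount u hu).trans_lt (ncard_lt_ncard ⟨inter_subset_left, fun h => hv (h huv).2⟩)
  linarith [hd u]
end

section
/- Let H_q be the incidence graph of a finite projective plane of order q (a (q+1)-regular bipartite graph on 2(q²+q+1) vertices) and A_q its adjacency matrix. Then the matrix M_q := √q·I − A_q belongs to M(H_q) and has corank q² + q. -/
open Matrix Set

variable {V : Type*} [Fintype V] [DecidableEq V]

open scoped Classical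

variable (P Lns : Type*) [Membership P Lns] [Fintype P] [Fintype Lns]
  [DecidableEq P] [DecidableEq Lns] [Configuration.ProjectivePlane P Lns]

/-- The incidence graph of a point-line configuration: points and lines are the
vertices, with an edge for each incident point-line pair. -/
def incidenceGraph : SimpleGraph (P ⊕ Lns) :=
  SimpleGraph.fromRel (fun x y => ∃ p l, x = Sum.inl p ∧ y = Sum.inr l ∧ p ∈ l)

/-- The adjacency matrix (over ℝ) of the incidence graph. -/
noncomputable def adjMat : Matrix (P ⊕ Lns) (P ⊕ Lns) ℝ :=
  Matrix.of (fun x y => if (incidenceGraph P Lns).Adj x y then (1 : ℝ) else 0)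

/-- The shifted adjacency matrix `M_q = √q · I − A_q`. -/
noncomputable def shiftedMat : Matrix (P ⊕ Lns) (P ⊕ Lns) ℝ :=
  Real.sqrt (Configuration.ProjectivePlane.order P Lns) •
      (1 : Matrix (P ⊕ Lns) (P ⊕ Lns) ℝ) - adjMat P Lns

/-! Write `N` for the point-line incidence matrix, so that the adjacency matrix of `H_q` is
`[[0, N], [Nᵀ, 0]]`. Two points lie on exactly one common line and every point on `q + 1` lines,
so `N Nᵀ = q I + J`, and dually `Nᵀ N = q I + J`.

A kernel vector `(f, g)` of `M_q` satisfies `√q f = N g` and `√q g = Nᵀ f`; then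
`q f = N Nᵀ f = q f + (∑ f) 𝟙` forces `∑ f = 0`, while `g = Nᵀ f / √q` is determined by `f`.
Conversely every such pair lies in the kernel, so the kernel is isomorphic to the sum-zero
vectors on the `q² + q + 1` points.

An eigenvector `(f, g)` of `M_q` with eigenvalue `μ < 0` is an eigenvector of `A_q` with
eigenvalue `t = √q - μ`, `t² > q`. Then `f` and `g` are eigenvectors of `N Nᵀ` and `Nᵀ N` for the
eigenvalue `t² ≠ q`, hence constant, and `N g = t f`, `Nᵀ f = t g` force the two constants to
agree. So all such eigenvectors are multiples of `𝟙`, while `𝟙ᵀ M_q 𝟙 < 0`: exactly one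
eigenvalue is negative.
-/

namespace Matrix.IsHermitian

open scoped ComplexOrder

variable {𝕜 n : Type*} [RCLike 𝕜] [Fintype n] [DecidableEq n] {A : Matrix n n 𝕜}

lemma exists_eigenvalues_neg_of_dotProduct_mulVec_neg (hA : A.IsHermitian) {x : n → 𝕜}
    (hx : star x ⬝ᵥ A *ᵥ x < 0) : ∃ i, hA.eigenvalues i < 0 := by
  by_contra! h
  exact hx.not_ge ((hA.posSemidef_iff_eigenvalues_nonneg.mpr h).dotProduct_mulVec_nonneg x)

lemma ncard_eigenvalues_neg_le_finrank (hA : A.IsHermitian) (W : Submodule 𝕜 (n → 𝕜))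
    (hW : ∀ (μ : ℝ) (v : n → 𝕜), μ < 0 → A *ᵥ v = μ • v → v ∈ W) :
    {i | hA.eigenvalues i < 0}.ncard ≤ Module.finrank 𝕜 W := by
  have hind : LinearIndependent 𝕜 fun i : {i | hA.eigenvalues i < 0} =>
      (⟨_, hW _ _ i.2 (hA.mulVec_eigenvectorBasis i)⟩ : W) :=
    .of_comp W.subtype <| (hA.eigenvectorBasis.toBasis.linearIndependent.map'
      (WithLp.linearEquiv 2 𝕜 (n → 𝕜)).toLinearMap (WithLp.linearEquiv 2 𝕜 (n → 𝕜)).ker).comp _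
      Subtype.val_injective
  rw [← Nat.card_coe_set_eq, Nat.card_eq_fintype_card]
  exact hind.fintype_card_le_finrank

lemma ncard_eigenvalues_neg_eq_one (hA : A.IsHermitian) {x : n → 𝕜}
    (hx : star x ⬝ᵥ A *ᵥ x < 0)
    (hW : ∀ (μ : ℝ) (v : n → 𝕜), μ < 0 → A *ᵥ v = μ • v → v ∈ 𝕜 ∙ x) :
    {i | hA.eigenvalues i < 0}.ncard = 1 := by
  have hx0 : x ≠ 0 := by rintro rfl; simp at hx
  refine le_antisymm ?_ ?_
  · simpa [finrank_span_singleton hx0] using hA.ncard_eigenvalues_neg_le_finrank _ hW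
  · obtain ⟨i, hi⟩ := hA.exists_eigenvalues_neg_of_dotProduct_mulVec_neg hx
    exact (Set.ncard_pos).mpr ⟨i, hi⟩

end Matrix.IsHermitian

lemma Matrix.smul_one_add_allOnes_mulVec {n α : Type*} [Fintype n] [DecidableEq n]
    [CommSemiring α] (c : α) (f : n → α) :
    (c • 1 + of fun _ _ => 1 : Matrix n n α) *ᵥ f = c • f + (∑ i, f i) • 1 := by
  rw [add_mulVec, smul_mulVec, one_mulVec]
  ext i
  simp [mulVec, dotProduct]

namespace Configuration

open Finset

variable {P L : Type*} [Membership P L]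

variable (P L) in
noncomputable def incidenceMatrix : Matrix P L ℝ := of fun p l => if p ∈ l then 1 else 0

namespace ProjectivePlane

lemma nonempty_points (P L : Type*) [Membership P L] [ProjectivePlane P L] : Nonempty P :=
  let ⟨p, _⟩ := exists_config (P := P) (L := L)
  ⟨p⟩

variable [Fintype P] [Fintype L] [ProjectivePlane P L]

lemma card_filter_mem (p : P) : #{l : L | p ∈ l} = order P L + 1 := by
  rw [← lineCount_eq L p, lineCount, Nat.card_eq_fintype_card, Fintype.card_subtype]

lemma card_filter_mem_and_mem (p p' : P) :
    #{l : L | p ∈ l ∧ p' ∈ l} = if p = p' then order P L + 1 else 1 := by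
  split_ifs with h
  · subst h
    simpa using card_filter_mem p
  · rw [Finset.card_eq_one]
    refine ⟨HasLines.mkLine h,
      eq_singleton_iff_unique_mem.mpr ⟨by simpa using HasLines.mkLine_ax h, fun l hl => ?_⟩⟩
    rw [mem_filter] at hl
    exact (Nondegenerate.eq_or_eq hl.2.1 hl.2.2 (HasLines.mkLine_ax h).1
      (HasLines.mkLine_ax h).2).resolve_left h

lemma incidenceMatrix_mulVec_one :
    incidenceMatrix P L *ᵥ 1 = ((order P L : ℝ) + 1) • 1 := by
  ext p
  simp [incidenceMatrix, mulVec, dotProduct, Finset.sum_boole, card_filter_mem]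

lemma transpose_incidenceMatrix_mulVec_one :
    (incidenceMatrix P L)ᵀ *ᵥ 1 = ((order P L : ℝ) + 1) • 1 := by
  -- `(incidenceMatrix P L)ᵀ` is definitionally the incidence matrix of the dual plane.
  have h := incidenceMatrix_mulVec_one (P := Dual L) (L := Dual P)
  rwa [Dual.order] at h

lemma incidenceMatrix_mul_transpose :
    incidenceMatrix P L * (incidenceMatrix P L)ᵀ = (order P L : ℝ) • 1 + of fun _ _ => 1 := by
  ext p p'
  simp only [incidenceMatrix, mul_apply, transpose_apply, of_apply, ← ite_and, mul_ite, mul_one,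
    mul_zero]
  rw [Finset.sum_boole, card_filter_mem_and_mem]
  by_cases h : p = p' <;> simp [h, one_apply, eq_comm]

lemma incidenceMatrix_mulVec_transpose_mulVec (f : P → ℝ) :
    incidenceMatrix P L *ᵥ ((incidenceMatrix P L)ᵀ *ᵥ f) =
      (order P L : ℝ) • f + (∑ p, f p) • 1 := by
  rw [mulVec_mulVec, incidenceMatrix_mul_transpose, smul_one_add_allOnes_mulVec]

lemma transpose_mulVec_incidenceMatrix_mulVec (g : L → ℝ) :
    (incidenceMatrix P L)ᵀ *ᵥ (incidenceMatrix P L *ᵥ g) =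
      (order P L : ℝ) • g + (∑ l, g l) • 1 := by
  have h := incidenceMatrix_mulVec_transpose_mulVec (P := Dual L) (L := Dual P) g
  rwa [Dual.order] at h

lemma exists_eq_smul_one_of_mulVec_transpose_mulVec_eq_smul {μ : ℝ} (hμ : μ ≠ order P L)
    {f : P → ℝ} (hf : incidenceMatrix P L *ᵥ ((incidenceMatrix P L)ᵀ *ᵥ f) = μ • f) :
    ∃ c : ℝ, f = c • 1 := by
  rw [incidenceMatrix_mulVec_transpose_mulVec] at hf
  have hμ' : μ - order P L ≠ 0 := sub_ne_zero.mpr hμ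
  refine ⟨(μ - order P L)⁻¹ * ∑ p, f p, funext fun p => ?_⟩
  have hp := congrFun hf p
  simp only [Pi.add_apply, Pi.smul_apply, smul_eq_mul, Pi.one_apply, mul_one] at hp ⊢
  field_simp
  linarith

lemma exists_eq_smul_one_of_transpose_mulVec_mulVec_eq_smul {μ : ℝ} (hμ : μ ≠ order P L)
    {g : L → ℝ} (hg : (incidenceMatrix P L)ᵀ *ᵥ (incidenceMatrix P L *ᵥ g) = μ • g) :
    ∃ c : ℝ, g = c • 1 :=
  exists_eq_smul_one_of_mulVec_transpose_mulVec_eq_smul (P := Dual L) (L := Dual P)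
    (by rwa [Dual.order]) hg

end ProjectivePlane

end Configuration

section

open Configuration ProjectivePlane

variable {P L : Type*} [Membership P L]

lemma adjMat_eq_fromBlocks :
    adjMat P L = fromBlocks 0 (incidenceMatrix P L) (incidenceMatrix P L)ᵀ 0 := by
  ext (p | l) (p' | l') <;> simp [adjMat, incidenceGraph, incidenceMatrix]

lemma isHermitian_adjMat : (adjMat P L).IsHermitian := by
  rw [adjMat_eq_fromBlocks]
  exact isHermitian_fromBlocks_iff.mpr ⟨by simp, by simp, by simp, by simp⟩

lemma adjMat_mulVec [Fintype P] [Fintype L] (x : P ⊕ L → ℝ) :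
    adjMat P L *ᵥ x =
      Sum.elim (incidenceMatrix P L *ᵥ (x ∘ Sum.inr))
        ((incidenceMatrix P L)ᵀ *ᵥ (x ∘ Sum.inl)) := by
  simp [adjMat_eq_fromBlocks, fromBlocks_mulVec]

lemma mem_span_one_of_adjMat_mulVec_eq_smul [Fintype P] [Fintype L] [ProjectivePlane P L]
    {t : ℝ} (ht : 0 < t) (htq : (order P L : ℝ) < t ^ 2) {v : P ⊕ L → ℝ}
    (hv : adjMat P L *ᵥ v = t • v) : v ∈ ℝ ∙ 1 := by
  have hNg : incidenceMatrix P L *ᵥ (v ∘ Sum.inr) = t • (v ∘ Sum.inl) :=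
    funext fun p => by simpa [adjMat_mulVec] using congrFun hv (Sum.inl p)
  have hNf : (incidenceMatrix P L)ᵀ *ᵥ (v ∘ Sum.inl) = t • (v ∘ Sum.inr) :=
    funext fun l => by simpa [adjMat_mulVec] using congrFun hv (Sum.inr l)
  obtain ⟨a, ha⟩ := exists_eq_smul_one_of_mulVec_transpose_mulVec_eq_smul htq.ne'
    (by rw [hNf, mulVec_smul, hNg, smul_smul, sq])
  obtain ⟨b, hb⟩ := exists_eq_smul_one_of_transpose_mulVec_mulVec_eq_smul htq.ne'
    (by rw [hNg, mulVec_smul, hNf, smul_smul, sq])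
  obtain ⟨p⟩ := nonempty_points P L
  obtain ⟨l⟩ : Nonempty L := nonempty_points (Dual L) (Dual P)
  have hp : b * (order P L + 1) = t * a := by
    simpa [hb, ha, mulVec_smul, incidenceMatrix_mulVec_one, mul_comm] using congrFun hNg p
  have hl : a * (order P L + 1) = t * b := by
    simpa [hb, ha, mulVec_smul, transpose_incidenceMatrix_mulVec_one, mul_comm] using congrFun hNf l
  have hab : a = b := by
    have h : (a - b) * (order P L + 1 + t) = 0 := by linear_combination hl - hp
    exact sub_eq_zero.mp ((mul_eq_zero.mp h).resolve_right (by positivity))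
  refine Submodule.mem_span_singleton.mpr ⟨a, funext fun x => ?_⟩
  rcases x with p | l
  · simpa using (congrFun ha p).symm
  · simpa [hab] using (congrFun hb l).symm

variable [DecidableEq P] [DecidableEq L] [ProjectivePlane P L]

lemma shiftedMat_apply_of_adj {u v : P ⊕ L} (h : (incidenceGraph P L).Adj u v) :
    shiftedMat P L u v = -1 := by
  simp [shiftedMat, adjMat, h, h.ne]

lemma shiftedMat_apply_of_not_adj {u v : P ⊕ L} (hne : u ≠ v)
    (h : ¬(incidenceGraph P L).Adj u v) :
    shiftedMat P L u v = 0 := by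
  simp [shiftedMat, adjMat, h, hne]

lemma isHermitian_shiftedMat : (shiftedMat P L).IsHermitian :=
  (isHermitian_one.smul (.all _)).sub isHermitian_adjMat

variable [Fintype P] [Fintype L]

lemma shiftedMat_mulVec_one :
    shiftedMat P L *ᵥ 1 = (√(order P L) - (order P L + 1)) • 1 := by
  rw [shiftedMat, sub_mulVec, smul_mulVec, one_mulVec, adjMat_mulVec]
  ext (p | l) <;> simp [incidenceMatrix_mulVec_one, transpose_incidenceMatrix_mulVec_one]

lemma shiftedMat_mulVec_sumElim (f : P → ℝ) (g : L → ℝ) :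
    shiftedMat P L *ᵥ Sum.elim f g = Sum.elim (√(order P L) • f - incidenceMatrix P L *ᵥ g)
      (√(order P L) • g - (incidenceMatrix P L)ᵀ *ᵥ f) := by
  ext (p | l) <;> simp [shiftedMat, sub_mulVec, smul_mulVec, adjMat_mulVec]

lemma shiftedMat_mulVec_sumElim_eq_zero_iff (f : P → ℝ) (g : L → ℝ) :
    shiftedMat P L *ᵥ Sum.elim f g = 0 ↔
      ∑ p, f p = 0 ∧ g = (√(order P L))⁻¹ • (incidenceMatrix P L)ᵀ *ᵥ f := by
  have hs : √(order P L : ℝ) ^ 2 = order P L := Real.sq_sqrt (Nat.cast_nonneg _)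
  have hs0 : √(order P L : ℝ) ≠ 0 := by
    have := one_lt_order P L
    positivity
  rw [shiftedMat_mulVec_sumElim, ← Sum.elim_zero_zero, Sum.elim_eq_iff, sub_eq_zero, sub_eq_zero]
  constructor
  · rintro ⟨hf, hg⟩
    refine ⟨?_, by rw [← hg, inv_smul_smul₀ hs0]⟩
    have h : incidenceMatrix P L *ᵥ ((incidenceMatrix P L)ᵀ *ᵥ f) = (order P L : ℝ) • f := by
      rw [← hg, mulVec_smul, ← hf, smul_smul, ← sq, hs]
    rw [incidenceMatrix_mulVec_transpose_mulVec, add_eq_left] at h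
    obtain ⟨p⟩ := nonempty_points P L
    simpa using congrFun h p
  · rintro ⟨hf, rfl⟩
    refine ⟨?_, by rw [smul_inv_smul₀ hs0]⟩
    rw [mulVec_smul, incidenceMatrix_mulVec_transpose_mulVec, hf, zero_smul, add_zero, smul_smul]
    congr 1
    rw [eq_inv_mul_iff_mul_eq₀ hs0, Real.mul_self_sqrt (Nat.cast_nonneg _)]

lemma mem_ker_shiftedMat_iff (x : P ⊕ L → ℝ) :
    x ∈ LinearMap.ker (shiftedMat P L).mulVecLin ↔ ∑ p, x (Sum.inl p) = 0 ∧
      x ∘ Sum.inr = (√(order P L))⁻¹ • (incidenceMatrix P L)ᵀ *ᵥ (x ∘ Sum.inl) := by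
  conv_lhs => rw [← Sum.elim_comp_inl_inr x]
  rw [LinearMap.mem_ker, mulVecLin_apply, shiftedMat_mulVec_sumElim_eq_zero_iff]
  rfl

variable (P L) in
noncomputable def kerShiftedMatEquiv :
    LinearMap.ker (shiftedMat P L).mulVecLin ≃ₗ[ℝ] LinearMap.ker (dotProductEquiv ℝ P 1) where
  toFun x := ⟨x.1 ∘ Sum.inl, by
    simpa [one_dotProduct] using ((mem_ker_shiftedMat_iff x.1).1 x.2).1⟩
  invFun f := ⟨Sum.elim f.1 ((√(order P L))⁻¹ • (incidenceMatrix P L)ᵀ *ᵥ f.1),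
    (mem_ker_shiftedMat_iff _).2 ⟨by
      simpa only [dotProductEquiv_apply_apply, one_dotProduct, Sum.elim_inl]
        using LinearMap.mem_ker.1 f.2, rfl⟩⟩
  map_add' _ _ := rfl
  map_smul' _ _ := rfl
  left_inv x := Subtype.ext <| by
    simp only [← ((mem_ker_shiftedMat_iff x.1).1 x.2).2, Sum.elim_comp_inl_inr]
  right_inv _ := rfl

lemma finrank_ker_shiftedMat :
    Module.finrank ℝ (LinearMap.ker (shiftedMat P L).mulVecLin) = order P L ^ 2 + order P L := by
  have := nonempty_points P L
  have h := Module.Dual.finrank_ker_add_one_of_ne_zero (f := dotProductEquiv ℝ P 1) (by simp)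
  rw [Module.finrank_fintype_fun_eq_card, card_points P L] at h
  rw [(kerShiftedMatEquiv P L).finrank_eq]
  omega

lemma ncard_eigenvalues_shiftedMat_neg :
    {i | (isHermitian_shiftedMat (P := P) (L := L)).eigenvalues i < 0}.ncard = 1 := by
  have hs : √(order P L : ℝ) ^ 2 = order P L := Real.sq_sqrt (Nat.cast_nonneg _)
  have hs_nonneg := Real.sqrt_nonneg (order P L : ℝ)
  refine IsHermitian.ncard_eigenvalues_neg_eq_one _ (x := 1) ?_ fun μ v hμ hv => ?_
  · have : √(order P L : ℝ) < order P L + 1 := by nlinarith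
    have := nonempty_points P L
    simp only [shiftedMat_mulVec_one, star_trivial, dotProduct_smul, one_dotProduct_one,
      smul_eq_mul]
    exact mul_neg_of_neg_of_pos (by linarith) (Nat.cast_pos.2 Fintype.card_pos)
  · refine mem_span_one_of_adjMat_mulVec_eq_smul (t := √(order P L) - μ) (by linarith)
      (by nlinarith) ?_
    rw [shiftedMat, sub_mulVec, smul_mulVec, one_mulVec] at hv
    rw [sub_smul, ← hv, sub_sub_cancel]

end

/-- for the incidence graph `H_q` of a projective plane of order `q`,
the matrix `M_q = √q·I − A_q` belongs to `M(H_q)` and has corank `q² + q`. -/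
theorem stmt10 :
    CdVMatrix (incidenceGraph P Lns) (shiftedMat P Lns) ∧
    Module.finrank ℝ (LinearMap.ker (shiftedMat P Lns).mulVecLin) =
      (Configuration.ProjectivePlane.order P Lns) ^ 2 +
        Configuration.ProjectivePlane.order P Lns :=
  ⟨⟨isHermitian_shiftedMat, fun _ _ h => by rw [shiftedMat_apply_of_adj h]; norm_num,
    fun _ _ => shiftedMat_apply_of_not_adj, ncard_eigenvalues_shiftedMat_neg⟩,
    finrank_ker_shiftedMat⟩
end
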